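/- Let M be a graded comultiplication R-module and N a graded 2-absorbing coprimary R-submodule of M such that Grad(Ann_R(N)) = Ann_R(N). Then N is a graded strongly 2-absorbing second R-submodule of M. -/

import Mathlib

/-!
It suffices to show that for homogeneous `x` and graded `K`, `xⁿ N ⊆ K` forces `x N ⊆ K`.
As `M` is a comultiplication module, `K = (0 :_M Ann K)`, so we need `r x N = 0` for `r ∈ Ann K`.
Since `K` is graded, every homogeneous component `r_g` of `r` lies in `Ann K`, so
`(r_g x)ⁿ = r_gⁿ⁻¹ · r_g xⁿ ∈ Ann N`; as `r_g x` is homogeneous it lies in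
`Grad(Ann N) = Ann N`, and summing over `g` gives `r x ∈ Ann N`.
-/

open DirectSum Pointwise

variable {G : Type} [AddGroup G] [DecidableEq G]
variable {R : Type} [CommRing R] (𝒜 : G → AddSubgroup R) [GradedRing 𝒜]
variable {M : Type} [AddCommGroup M] [Module R M] (ℳ : G → AddSubgroup M)
  [SetLike.GradedSMul 𝒜 ℳ] [DirectSum.Decomposition ℳ]

/-- A submodule is graded if it contains every homogeneous component of each of
its elements. -/
def IsGradedSubmodule (N : Submodule R M) : Prop :=
  ∀ (g : G) (m : M), m ∈ N → (DirectSum.decompose ℳ m g : M) ∈ N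

/-- The graded radical of an ideal: all `r` such that for each `g` some positive
power of the degree-`g` component of `r` lies in `P`. -/
def gradRad (P : Ideal R) : Set R :=
  {r : R | ∀ g : G, ∃ n : ℕ, 0 < n ∧ ((DirectSum.decompose 𝒜 r g : R)) ^ n ∈ P}

/-- Graded 2-absorbing coprimary submodule. -/
def IsGr2AbsCoprimary (N : Submodule R M) : Prop :=
  N ≠ ⊥ ∧ IsGradedSubmodule ℳ N ∧
  ∀ x y : R, (∃ g, x ∈ 𝒜 g) → (∃ g, y ∈ 𝒜 g) →
    ∀ K : Submodule R M, IsGradedSubmodule ℳ K →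
      (∀ m ∈ N, (x * y) • m ∈ K) →
      x ∈ gradRad 𝒜 (K.colon N) ∨ y ∈ gradRad 𝒜 (K.colon N) ∨ x * y ∈ N.annihilator

/-- Graded 2-absorbing primary ideal. -/
def IsGr2AbsPrimaryIdeal (P : Ideal R) : Prop :=
  P ≠ ⊤ ∧ (∀ (g : G) (r : R), r ∈ P → (DirectSum.decompose 𝒜 r g : R) ∈ P) ∧
  ∀ a b c : R, (∃ g, a ∈ 𝒜 g) → (∃ g, b ∈ 𝒜 g) → (∃ g, c ∈ 𝒜 g) →
    a * b * c ∈ P → a * b ∈ P ∨ a * c ∈ gradRad 𝒜 P ∨ b * c ∈ gradRad 𝒜 P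

/-- Graded strongly 2-absorbing second submodule. -/
def IsGrStrongly2AbsSecond (N : Submodule R M) : Prop :=
  N ≠ ⊥ ∧ IsGradedSubmodule ℳ N ∧
  ∀ x y : R, (∃ g, x ∈ 𝒜 g) → (∃ g, y ∈ 𝒜 g) →
    ∀ K : Submodule R M, IsGradedSubmodule ℳ K →
      (∀ m ∈ N, (x * y) • m ∈ K) →
      (∀ m ∈ N, x • m ∈ K) ∨ (∀ m ∈ N, y • m ∈ K) ∨ x * y ∈ N.annihilator

theorem decompose_smul_of_mem (r : R) {m : M} {h : G} (hm : m ∈ ℳ h) (g : G) :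
    (decompose ℳ (r • m) (g + h) : M) = (decompose 𝒜 r g : R) • m := by
  induction r using DirectSum.Decomposition.inductionOn 𝒜 with
  | zero => simp
  | @homogeneous g' a =>
    have ham : (a : R) • m ∈ ℳ (g' + h) := SetLike.GradedSMul.smul_mem a.2 hm
    by_cases hg : g' = g
    · subst hg
      rw [decompose_of_mem_same ℳ ham, decompose_of_mem_same 𝒜 a.2]
    · rw [decompose_of_mem_ne ℳ ham (fun h' => hg (add_right_cancel h')),
        decompose_of_mem_ne 𝒜 a.2 hg, zero_smul]
  | add a b ha hb =>
    simp only [add_smul, decompose_add, DirectSum.add_apply, AddSubgroup.coe_add, ha, hb]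

theorem decompose_mem_annihilator {K : Submodule R M} (hK : IsGradedSubmodule ℳ K) {r : R}
    (hr : r ∈ K.annihilator) (g : G) : (decompose 𝒜 r g : R) ∈ K.annihilator := by
  classical
  rw [Submodule.mem_annihilator] at hr ⊢
  intro m hm
  rw [← sum_support_decompose ℳ m, Finset.smul_sum]
  refine Finset.sum_eq_zero fun h _ => ?_
  rw [← decompose_smul_of_mem 𝒜 ℳ r (decompose ℳ m h).2 g, hr _ (hK h m hm), decompose_zero,
    DirectSum.zero_apply, ZeroMemClass.coe_zero]

theorem mem_gradRad_of_pow_mem {P : Ideal R} {x : R} {g : G} (hx : x ∈ 𝒜 g) {n : ℕ} (hn : 0 < n)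
    (hxn : x ^ n ∈ P) : x ∈ gradRad 𝒜 P := by
  intro g'
  by_cases hg : g = g'
  · exact ⟨n, hn, by rwa [← hg, decompose_of_mem_same 𝒜 hx]⟩
  · exact ⟨1, one_pos, by simp [decompose_of_mem_ne 𝒜 hx hg]⟩

theorem exists_pow_mem_of_mem_gradRad {P : Ideal R} {x : R} {g : G} (hx : x ∈ 𝒜 g)
    (hxP : x ∈ gradRad 𝒜 P) : ∃ n, 0 < n ∧ x ^ n ∈ P := by
  simpa only [decompose_of_mem_same 𝒜 hx] using hxP g

theorem mul_mem_of_mul_pow_mem {P : Ideal R} (hrad : gradRad 𝒜 P ⊆ P) {a x : R} {g g' : G}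
    (ha : a ∈ 𝒜 g) (hx : x ∈ 𝒜 g') {n : ℕ} (hn : 0 < n) (haxn : a * x ^ n ∈ P) : a * x ∈ P := by
  obtain ⟨k, rfl⟩ := Nat.exists_eq_add_one.mpr hn
  refine hrad (mem_gradRad_of_pow_mem 𝒜 (SetLike.mul_mem_graded ha hx) hn ?_)
  rw [show (a * x) ^ (k + 1) = a ^ k * (a * x ^ (k + 1)) by ring]
  exact P.mul_mem_left _ haxn

theorem smul_mem_of_mem_gradRad_colon {N K : Submodule R M} (hK : IsGradedSubmodule ℳ K)
    (hKcomul : {m : M | ∀ r ∈ K.annihilator, r • m = 0} ⊆ K)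
    (hrad : gradRad 𝒜 N.annihilator ⊆ N.annihilator)
    {x : R} {g₀ : G} (hx : x ∈ 𝒜 g₀) (hxK : x ∈ gradRad 𝒜 (K.colon N)) :
    ∀ m ∈ N, x • m ∈ K := by
  classical
  obtain ⟨n, hn, hxn⟩ := exists_pow_mem_of_mem_gradRad 𝒜 hx hxK
  have hrx : ∀ r ∈ K.annihilator, r * x ∈ N.annihilator := by
    intro r hr
    rw [← sum_support_decompose 𝒜 r, Finset.sum_mul]
    refine Submodule.sum_mem _ fun g _ =>
      mul_mem_of_mul_pow_mem 𝒜 hrad (decompose 𝒜 r g).2 hx hn ?_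
    refine Submodule.mem_annihilator.mpr fun m hm => ?_
    rw [mul_smul]
    exact Submodule.mem_annihilator.mp (decompose_mem_annihilator 𝒜 ℳ hK hr g) _
      (Submodule.mem_colon.mp hxn m hm)
  intro m hm
  refine hKcomul fun r hr => ?_
  rw [smul_smul]
  exact Submodule.mem_annihilator.mp (hrx r hr) m hm

theorem stmt_10
    (hcomul : ∀ N' : Submodule R M, IsGradedSubmodule ℳ N' →
      (N' : Set M) = {m : M | ∀ r ∈ N'.annihilator, r • m = (0 : M)})
    (N : Submodule R M) (hN : IsGr2AbsCoprimary 𝒜 ℳ N)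
    (hrad : gradRad 𝒜 N.annihilator = (N.annihilator : Set R)) :
    IsGrStrongly2AbsSecond 𝒜 ℳ N := by
  obtain ⟨hne, hgr, habs⟩ := hN
  refine ⟨hne, hgr, fun x y ⟨gx, hx⟩ ⟨gy, hy⟩ K hK hxy => ?_⟩
  have hKcomul := (hcomul K hK).superset
  exact (habs x y ⟨gx, hx⟩ ⟨gy, hy⟩ K hK hxy).imp
    (smul_mem_of_mem_gradRad_colon 𝒜 ℳ hK hKcomul hrad.subset hx)
    (Or.imp_left (smul_mem_of_mem_gradRad_colon 𝒜 ℳ hK hKcomul hrad.subset hy))
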